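/- For k ≥ 2 and k ≤ m ≤ n-1, the number of connected interval-clique graphs on {1,...,n} with k maximal cliques whose last maximal clique is [m:n] equals C(n-1, k-1)·C(m-2, k-2) − C(n-2, k-2)·C(m-1, k-1). -/

import Mathlib

/-!
Write `x` for the left endpoints `a_i` and `y` for the right endpoints `b_i`. Without the overlap
condition the two sequences are independent: `x` increases strictly from `1` to `m` and `y` from
at least `1` to `n`, which gives `C(m-2,k-2)·C(n-1,k-1)` pairs. The overlap condition fails exactly
when the pair crosses, `y_i < x_{i+1}` for some `i`. Exchanging the tails of `x` and `y` after the
first crossing leaves that crossing the first one, so it is an involution, and it matches the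
crossing pairs ending at `(m, n)` with the crossing pairs ending at `(n, m)`. As `m < n`, every
pair of the latter kind crosses at its last step, so there are `C(n-2,k-2)·C(m-1,k-1)` of them.
-/

open Set Fin

section StrictMonoTuples

variable {α : Type*} [LinearOrder α]

theorem Fin.strictMono_snoc_iff {n : ℕ} {f : Fin n → α} {a : α} :
    StrictMono (Fin.snoc f a : Fin (n + 1) → α) ↔ StrictMono f ∧ ∀ i, f i < a := by
  rw [← Fin.insertNth_last', Fin.strictMono_insertNth_iff]
  simp [Fin.castSucc_lt_last]

theorem card_strictMono_forall_mem (s : Set α) (r : ℕ) :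
    Nat.card {f : Fin r → α // StrictMono f ∧ ∀ i, f i ∈ s} = (Nat.card s).choose r := by
  rw [← Set.powersetCard.card]
  refine Nat.card_congr (Equiv.trans ?_ Set.powersetCard.ofFinEmbEquiv)
  exact
    { toFun f := OrderEmbedding.ofStrictMono (fun i => ⟨f.1 i, f.2.2 i⟩) fun _ _ h => f.2.1 h
      invFun g := ⟨fun i => g i, fun _ _ h => g.strictMono h, fun i => (g i).2⟩
      left_inv _ := rfl
      right_inv _ := rfl }

theorem card_strictMono_forall_mem_last_eq_eq_card_init (s : Set α) {b : α} (hb : b ∈ s)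
    (r : ℕ) :
    Nat.card {y : Fin (r + 1) → α // StrictMono y ∧ (∀ i, y i ∈ s) ∧ y (last r) = b} =
      Nat.card {f : Fin r → α // StrictMono f ∧ ∀ i, f i ∈ s ∩ Iio b} := by
  refine Nat.card_congr
    { toFun y := ⟨init y.1, y.2.1.comp (strictMono_castSucc), fun i =>
        ⟨y.2.2.1 _, (y.2.1 (castSucc_lt_last i)).trans_eq y.2.2.2⟩⟩
      invFun f := ⟨snoc f.1 b, Fin.strictMono_snoc_iff.2 ⟨f.2.1, fun i => (f.2.2 i).2⟩, ?_,
        snoc_last _ _⟩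
      left_inv y := Subtype.ext ?_
      right_inv f := Subtype.ext (by simp) }
  · intro i
    induction i using Fin.lastCases with
    | last => simpa using hb
    | cast j => simpa using (f.2.2 j).1
  · conv_rhs => rw [← snoc_init_self y.1]
    rw [y.2.2.2]

theorem card_strictMono_zero_eq_last_eq_eq_card_tail (r : ℕ) (a b : α) :
    Nat.card {x : Fin (r + 2) → α // StrictMono x ∧ x 0 = a ∧ x (last (r + 1)) = b} =
      Nat.card {g : Fin (r + 1) → α //
        StrictMono g ∧ (∀ i, g i ∈ Ioi a) ∧ g (last r) = b} := by
  refine Nat.card_congr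
    { toFun x := ⟨tail x.1, x.2.1.comp (strictMono_succ), fun i =>
        x.2.2.1.symm.trans_lt (x.2.1 (succ_pos i)), ?_⟩
      invFun g := ⟨cons a g.1, Fin.strictMono_cons.2 ⟨g.2.2.1, g.2.1⟩, cons_zero _ _, ?_⟩
      left_inv x := Subtype.ext ?_
      right_inv g := Subtype.ext (by simp) }
  · rw [tail, succ_last, x.2.2.2]
  · rw [← succ_last, cons_succ, g.2.2.2]
  · conv_rhs => rw [← cons_self_tail x.1]
    rw [x.2.2.1]

end StrictMonoTuples

namespace IntervalClique

variable {α : Type*} {k : ℕ}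

section Endpoints

variable [LinearOrder α]

def leftEndpoints (a b : α) : Set (Fin (k + 1) → α) :=
  {x | StrictMono x ∧ x 0 = a ∧ x (last k) = b}

def rightEndpoints (a b : α) : Set (Fin (k + 1) → α) :=
  {y | StrictMono y ∧ a ≤ y 0 ∧ y (last k) = b}

def endpointPairs (c p q : α) : Set ((Fin (k + 1) → α) × (Fin (k + 1) → α)) :=
  leftEndpoints c p ×ˢ rightEndpoints c q

theorem endpointPairs_finite [LocallyFiniteOrder α] (c p q : α) :
    (endpointPairs (k := k) c p q).Finite := by
  refine ((Set.Finite.pi' fun _ => finite_Icc c p).prod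
    (Set.Finite.pi' fun _ => finite_Icc c q)).subset ?_
  rintro ⟨x, y⟩ ⟨⟨hx, hx0, hxl⟩, hy, hy0, hyl⟩
  exact ⟨fun i => ⟨hx0 ▸ hx.monotone (Fin.zero_le i), hxl ▸ hx.monotone (le_last i)⟩,
    fun i => ⟨hy0.trans (hy.monotone (Fin.zero_le i)), hyl ▸ hy.monotone (le_last i)⟩⟩

theorem ncard_leftEndpoints_nat (r : ℕ) {a b : ℕ} (hab : a < b) :
    (leftEndpoints (k := r + 1) a b).ncard = (b - a - 1).choose r := by
  rw [← Nat.card_coe_set_eq, leftEndpoints, coe_ofPred,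
    card_strictMono_zero_eq_last_eq_eq_card_tail,
    card_strictMono_forall_mem_last_eq_eq_card_init (Ioi a) hab, card_strictMono_forall_mem,
    Ioi_inter_Iio, Nat.card_coe_set_eq, Set.ncard_Ioo_nat]

theorem ncard_rightEndpoints_nat (r : ℕ) {a b : ℕ} (hab : a ≤ b) :
    (rightEndpoints (k := r) a b).ncard = (b - a).choose r := by
  have hlow : ∀ y : Fin (r + 1) → ℕ, StrictMono y → (a ≤ y 0 ↔ ∀ i, y i ∈ Ici a) :=
    fun y hy => ⟨fun h i => h.trans (hy.monotone (Fin.zero_le i)), fun h => h 0⟩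
  rw [← Nat.card_coe_set_eq, rightEndpoints, coe_ofPred,
    Nat.card_congr (Equiv.subtypeEquivRight fun y =>
      and_congr_right fun hy => and_congr_left' (hlow y hy)),
    card_strictMono_forall_mem_last_eq_eq_card_init (Ici a) hab, card_strictMono_forall_mem,
    Ici_inter_Iio, Nat.card_coe_set_eq, Set.ncard_Ico_nat]

theorem ncard_endpointPairs_nat (r : ℕ) {c p q : ℕ} (hp : c < p) (hq : c ≤ q) :
    (endpointPairs (k := r + 1) c p q).ncard =
      (p - c - 1).choose r * (q - c).choose (r + 1) := by
  rw [endpointPairs, Set.ncard_prod, ncard_leftEndpoints_nat r hp,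
    ncard_rightEndpoints_nat (r + 1) hq]

end Endpoints

variable {x y : Fin (k + 1) → α} {i j : Fin k}

def splice (x y : Fin (k + 1) → α) (i : Fin k) : Fin (k + 1) → α :=
  fun j => if j ≤ i.castSucc then x j else y j

@[simp] theorem splice_zero : splice x y i 0 = x 0 :=
  if_pos (Fin.zero_le _)

@[simp] theorem splice_last : splice x y i (last k) = y (last k) :=
  if_neg (castSucc_lt_last i).not_ge

theorem splice_splice : splice (splice x y i) (splice y x i) i = x := by
  funext j
  by_cases hj : j ≤ i.castSucc <;> simp [splice, hj]

variable [LinearOrder α]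

/-- The overlap condition `a_{i+1} ≤ b_i` fails at `i`. -/
def Crosses (x y : Fin (k + 1) → α) (i : Fin k) : Prop :=
  y i.castSucc < x i.succ

instance (x y : Fin (k + 1) → α) : DecidablePred (Crosses x y) :=
  fun i => inferInstanceAs (Decidable (y i.castSucc < x i.succ))

theorem strictMono_splice (hx : StrictMono x) (hy : StrictMono y)
    (h : x i.castSucc < y i.succ) : StrictMono (splice x y i) := by
  rw [Fin.strictMono_iff_lt_succ]
  intro j
  rcases lt_trichotomy j i with hj | rfl | hj
  · simpa [splice, hj.le, succ_le_castSucc_iff.2 hj] using hx (castSucc_lt_succ (i := j))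
  · simpa [splice] using h
  · simpa [splice, hj, (castSucc_lt_succ (i := i)).trans (succ_lt_succ_iff.2 hj) |>.not_ge,
      not_le.2 (castSucc_lt_castSucc_iff.2 hj)] using hy (castSucc_lt_succ (i := j))

theorem crosses_splice_iff_of_lt (hj : j < i) :
    Crosses (splice x y i) (splice y x i) j ↔ Crosses x y j := by
  simp [Crosses, splice, hj.le, succ_le_castSucc_iff.2 hj]

theorem crosses_splice_self (hy : StrictMono y) : Crosses (splice x y i) (splice y x i) i := by
  simpa [Crosses, splice] using hy (castSucc_lt_succ (i := i))

theorem le_of_forall_lt_not_crosses (hy : StrictMono y) (h0 : x 0 ≤ y 0)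
    (hi : ∀ j < i, ¬ Crosses x y j) : x i.castSucc ≤ y i.castSucc := by
  obtain ⟨_ | j, hj⟩ := i
  · exact h0
  · have := hi ⟨j, by omega⟩ (by simp [Fin.lt_def])
    exact (not_lt.1 this).trans (hy (by simp [Fin.lt_def])).le

def switch (xy : (Fin (k + 1) → α) × (Fin (k + 1) → α)) :
    (Fin (k + 1) → α) × (Fin (k + 1) → α) :=
  if h : ∃ i, Crosses xy.1 xy.2 i then
    (splice xy.1 xy.2 (Fin.find _ h), splice xy.2 xy.1 (Fin.find _ h))
  else xy

theorem switch_of_crosses {xy : (Fin (k + 1) → α) × (Fin (k + 1) → α)}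
    (h : ∃ i, Crosses xy.1 xy.2 i) :
    switch xy = (splice xy.1 xy.2 (Fin.find _ h), splice xy.2 xy.1 (Fin.find _ h)) :=
  dif_pos h

theorem switch_switch {xy : (Fin (k + 1) → α) × (Fin (k + 1) → α)} (hy : StrictMono xy.2) :
    switch (switch xy) = xy := by
  by_cases h : ∃ i, Crosses xy.1 xy.2 i
  · have h' : ∃ i, Crosses (switch xy).1 (switch xy).2 i :=
      ⟨Fin.find _ h, by rw [switch_of_crosses h]; exact crosses_splice_self hy⟩
    have hfind : Fin.find _ h' = Fin.find _ h := by
      simp only [switch_of_crosses h, Fin.find_eq_iff]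
      refine ⟨crosses_splice_self hy, fun j hj => ?_⟩
      rw [crosses_splice_iff_of_lt hj]
      exact Fin.find_min h hj
    rw [switch_of_crosses h', hfind]
    simp only [switch_of_crosses h, splice_splice]
  · simp only [switch, dif_neg h]

def crossingPairs (c p q : α) : Set ((Fin (k + 1) → α) × (Fin (k + 1) → α)) :=
  {xy ∈ endpointPairs c p q | ∃ i, Crosses xy.1 xy.2 i}

theorem crossingPairs_subset_endpointPairs (c p q : α) :
    crossingPairs (k := k) c p q ⊆ endpointPairs c p q :=
  sep_subset _ _

theorem switch_mem_crossingPairs {c p q : α} {xy : (Fin (k + 1) → α) × (Fin (k + 1) → α)}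
    (h : xy ∈ crossingPairs c p q) : switch xy ∈ crossingPairs c q p := by
  obtain ⟨⟨⟨hx, hx0, hxl⟩, hy, hy0, hyl⟩, hcross⟩ := h
  have hlt : xy.1 (Fin.find _ hcross).castSucc < xy.2 (Fin.find _ hcross).succ :=
    (le_of_forall_lt_not_crosses hy (hx0.trans_le hy0) fun _ => Fin.find_min hcross).trans_lt
      (hy castSucc_lt_succ)
  rw [switch_of_crosses hcross]
  exact ⟨⟨⟨strictMono_splice hx hy hlt, by simpa using hx0, by simpa using hyl⟩,
    strictMono_splice hy hx (Fin.find_spec hcross), by simpa using hy0, by simpa using hxl⟩,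
    _, crosses_splice_self hy⟩

theorem ncard_crossingPairs_comm (c p q : α) :
    (crossingPairs (k := k) c p q).ncard = (crossingPairs (k := k) c q p).ncard := by
  simp only [← Nat.card_coe_set_eq]
  exact Nat.card_congr
    { toFun xy := ⟨switch xy, switch_mem_crossingPairs xy.2⟩
      invFun xy := ⟨switch xy, switch_mem_crossingPairs xy.2⟩
      left_inv xy := Subtype.ext (switch_switch xy.2.1.2.1)
      right_inv xy := Subtype.ext (switch_switch xy.2.1.2.1) }

theorem crossingPairs_eq_endpointPairs {c p q : α} (hqp : q < p) :
    crossingPairs (k := k + 1) c p q = endpointPairs c p q := by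
  refine Set.sep_eq_self_iff_mem_true.2 fun xy ⟨⟨_, _, hxl⟩, hy, _, hyl⟩ => ⟨last k, ?_⟩
  have := hy (castSucc_lt_last (last k))
  simp only [Crosses, succ_last, hxl]
  exact this.trans_eq hyl |>.trans hqp

end IntervalClique

open IntervalClique in
/-- for `k ≥ 2` and `k ≤ m ≤ n-1`, the number of connected interval-clique
graphs on `{1,...,n}` with `k` maximal cliques whose last maximal clique is `[m:n]`
(such graphs being determined by their maximal-clique endpoint sequences
`1 = a_1 < ... < a_k ≤ n`, `1 ≤ b_1 < ... < b_k = n`, with the overlap condition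
`a_{i+1} ≤ b_i`, and `a_k = m`, `b_k = n`) equals
`C(n-1,k-1)·C(m-2,k-2) − C(n-2,k-2)·C(m-1,k-1)`. -/
theorem card_connected_intervalClique_last_clique_fixed (n m k : ℕ) (hk : 2 ≤ k)
    (hm : k ≤ m) (hn : m ≤ n - 1) :
    Nat.card {p : (Fin k → ℕ) × (Fin k → ℕ) //
        StrictMono p.1 ∧ StrictMono p.2 ∧
        p.1 ⟨0, by omega⟩ = 1 ∧ (∀ i, p.1 i ≤ n) ∧
        1 ≤ p.2 ⟨0, by omega⟩ ∧ p.2 ⟨k - 1, by omega⟩ = n ∧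
        (∀ i : Fin k, ∀ h : i.val + 1 < k, p.1 ⟨i.val + 1, h⟩ ≤ p.2 i) ∧
        p.1 ⟨k - 1, by omega⟩ = m}
      = (n - 1).choose (k - 1) * (m - 2).choose (k - 2)
        - (n - 2).choose (k - 2) * (m - 1).choose (k - 1) := by
  obtain ⟨r, rfl⟩ : ∃ r, k = r + 2 := ⟨k - 2, by omega⟩
  have hmn : m < n := by omega
  calc _ = Nat.card ↥(endpointPairs 1 m n \ crossingPairs 1 m n) := by
        refine Nat.card_congr (Equiv.subtypeEquivRight fun xy => ⟨?_, ?_⟩)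
        · rintro ⟨hx, hy, hx0, -, hy0, hyn, hoverlap, hxm⟩
          exact ⟨⟨⟨hx, hx0, hxm⟩, hy, hy0, hyn⟩,
            fun ⟨_, i, hi⟩ => (hoverlap i.castSucc i.succ.isLt).not_gt hi⟩
        · rintro ⟨⟨⟨hx, hx0, hxm⟩, hy, hy0, hyn⟩, hnc⟩
          refine ⟨hx, hy, hx0, fun i => (hx.monotone (le_last i)).trans (hxm.trans_le hmn.le),
            hy0, hyn, fun i hi => not_lt.1 fun h =>
              hnc ⟨⟨⟨hx, hx0, hxm⟩, hy, hy0, hyn⟩, ⟨i, by omega⟩, h⟩, hxm⟩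
    _ = (endpointPairs 1 m n).ncard - (endpointPairs 1 n m).ncard := by
        rw [Nat.card_coe_set_eq,
          ncard_sdiff' (crossingPairs_subset_endpointPairs 1 m n) (endpointPairs_finite 1 m n),
          ncard_crossingPairs_comm, crossingPairs_eq_endpointPairs hmn]
    _ = _ := by
        rw [ncard_endpointPairs_nat r (by omega) (by omega),
          ncard_endpointPairs_nat r (by omega) (by omega), Nat.mul_comm]
        simp only [Nat.sub_sub, Nat.reduceAdd, Nat.add_one_sub_one, add_tsub_cancel_right]
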